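/- Let (Ω, 𝓕, P) be a probability space with Ω a standard Borel space, K, m ≥ 1, and let Z : Ω → Fin K, X, Y, Y₀, Y₁ : Ω → Bool, U : Ω → Fin m be measurable and satisfy consistency. Assume U and Z are independent (IndepFun), and for each i : Bool the map Y_i := if i then Y₁ else Y₀ is conditionally independent of the pair ⟨X, Z⟩ given the σ-algebra generated by U (CondIndepFun). Then for every z : Fin K with P(Z = z) > 0 and all y, ỹ : Bool: P(Y₀ = y ∧ Y₁ = ỹ) ≤ P[{X = false} ∩ {Y = y} | {Z = z}] + P[{X = true} ∩ {Y = ỹ} | {Z = z}]. -/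

import Mathlib

open MeasureTheory ProbabilityTheory

/-- Step (2) of the proof of Theorem 1: under IV assumption (iv)
(`U ⫫ Z` and `Y(x_i) ⫫ (X, Z) | U` for each `i`), the joint inequality (joint) holds:
`P(Y₀ = y, Y₁ = y') ≤ P(X = 0, Y = y | Z = z) + P(X = 1, Y = y' | Z = z)`. -/
lemma comap_const_on_fibers {Ω α E : Type*} [MeasurableSpace α] [MeasurableSpace E]
    [MeasurableSingletonClass E]
    {U : Ω → α} {f : Ω → E}
    (hf : Measurable[MeasurableSpace.comap U inferInstance] f)
    {ω₁ ω₂ : Ω} (h : U ω₁ = U ω₂) : f ω₁ = f ω₂ := by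
  obtain ⟨s, -, hs⟩ := hf (measurableSet_singleton (f ω₁))
  have h1 : ω₁ ∈ U ⁻¹' s := by rw [hs]; rfl
  have h2 : ω₂ ∈ U ⁻¹' s := by simpa [Set.mem_preimage, ← h] using h1
  rw [hs] at h2
  exact (h2 : f ω₂ ∈ ({f ω₁} : Set E)).symm ▸ rfl

lemma keyCI {Ω : Type*} [MeasurableSpace Ω] [StandardBorelSpace Ω]
    (P : Measure Ω) [IsProbabilityMeasure P] {m : ℕ} {U : Ω → Fin m} (hU : Measurable U)
    {β γ : Type*} [MeasurableSpace β] [MeasurableSpace γ] {f : Ω → β} {g : Ω → γ}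
    (hf : Measurable f) (hg : Measurable g)
    (hci : CondIndepFun (MeasurableSpace.comap U inferInstance) hU.comap_le f g P)
    {s : Set β} {t : Set γ} (hs : MeasurableSet s) (ht : MeasurableSet t) (u : Fin m) :
    P (f ⁻¹' s ∩ g ⁻¹' t ∩ U ⁻¹' {u}) * P (U ⁻¹' {u})
      = P (f ⁻¹' s ∩ U ⁻¹' {u}) * P (g ⁻¹' t ∩ U ⁻¹' {u}) := by
  have hle : MeasurableSpace.comap U inferInstance ≤ _ := hU.comap_le
  set T : Set Ω := U ⁻¹' {u} with hT
  have hTmU : MeasurableSet[MeasurableSpace.comap U inferInstance] T := ⟨{u}, measurableSet_singleton u, rfl⟩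
  have hTm : MeasurableSet T := hU (measurableSet_singleton u)
  by_cases hp : P T = 0
  · have h1 : P (f ⁻¹' s ∩ g ⁻¹' t ∩ T) = 0 :=
      le_antisymm ((measure_mono Set.inter_subset_right).trans hp.le) zero_le
    have h2 : P (f ⁻¹' s ∩ T) = 0 :=
      le_antisymm ((measure_mono Set.inter_subset_right).trans hp.le) zero_le
    rw [h1, h2, hp, mul_zero, zero_mul]
  -- positive case
  obtain ⟨ω₀, hω₀⟩ := nonempty_of_measure_ne_zero hp
  haveI : SigmaFinite (P.trim hle) := by infer_instance
  have hA : MeasurableSet (f ⁻¹' s) := hf hs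
  have hB : MeasurableSet (g ⁻¹' t) := hg ht
  -- notation for condexp functions
  set FA : Ω → ℝ := P⟦f ⁻¹' s | MeasurableSpace.comap U inferInstance⟧ with hFA
  set FB : Ω → ℝ := P⟦g ⁻¹' t | MeasurableSpace.comap U inferInstance⟧ with hFB
  set FAB : Ω → ℝ := P⟦f ⁻¹' s ∩ g ⁻¹' t | MeasurableSpace.comap U inferInstance⟧ with hFAB
  have hcond : FAB =ᵐ[P] fun ω => FA ω * FB ω :=
    (condIndepFun_iff_condExp_inter_preimage_eq_mul hf hg).mp hci s t hs ht
  -- integrability of indicators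
  have hintA : Integrable ((f ⁻¹' s).indicator (fun _ => (1:ℝ))) P :=
    (integrable_const 1).indicator hA
  have hintB : Integrable ((g ⁻¹' t).indicator (fun _ => (1:ℝ))) P :=
    (integrable_const 1).indicator hB
  have hintAB : Integrable ((f ⁻¹' s ∩ g ⁻¹' t).indicator (fun _ => (1:ℝ))) P :=
    (integrable_const 1).indicator (hA.inter hB)
  -- set-integral of indicator
  have hind : ∀ (A : Set Ω), MeasurableSet A →
      ∫ ω in T, A.indicator (fun _ => (1:ℝ)) ω ∂P = (P (A ∩ T)).toReal := by
    intro A hAm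
    rw [setIntegral_indicator hAm]
    simp [Measure.restrict_apply hAm, Set.inter_comm A T]
    rfl
  -- constancy on T
  have hconstA : ∀ ω ∈ T, FA ω = FA ω₀ := fun ω hω =>
    comap_const_on_fibers (stronglyMeasurable_condExp.measurable) (show U ω = U ω₀ by
      have h1 : U ω = u := hω
      have h2 : U ω₀ = u := hω₀
      rw [h1, h2])
  have hconstB : ∀ ω ∈ T, FB ω = FB ω₀ := fun ω hω =>
    comap_const_on_fibers (stronglyMeasurable_condExp.measurable) (show U ω = U ω₀ by
      have h1 : U ω = u := hω
      have h2 : U ω₀ = u := hω₀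
      rw [h1, h2])
  -- values
  have hintFA : ∫ ω in T, FA ω ∂P = (P (f ⁻¹' s ∩ T)).toReal := by
    rw [hFA, setIntegral_condExp hle hintA hTmU, hind _ hA]
  have hintFB : ∫ ω in T, FB ω ∂P = (P (g ⁻¹' t ∩ T)).toReal := by
    rw [hFB, setIntegral_condExp hle hintB hTmU, hind _ hB]
  have hintFAB : ∫ ω in T, FAB ω ∂P = (P (f ⁻¹' s ∩ g ⁻¹' t ∩ T)).toReal := by
    rw [hFAB, setIntegral_condExp hle hintAB hTmU, hind _ (hA.inter hB)]
  have hconstIntA : ∫ ω in T, FA ω ∂P = FA ω₀ * (P T).toReal := by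
    rw [setIntegral_congr_fun hTm hconstA, setIntegral_const, smul_eq_mul, mul_comm]
    rfl
  have hconstIntB : ∫ ω in T, FB ω ∂P = FB ω₀ * (P T).toReal := by
    rw [setIntegral_congr_fun hTm hconstB, setIntegral_const, smul_eq_mul, mul_comm]
    rfl
  have hconstIntAB : ∫ ω in T, FAB ω ∂P = FA ω₀ * FB ω₀ * (P T).toReal := by
    rw [integral_congr_ae (ae_restrict_of_ae hcond)]
    rw [setIntegral_congr_fun hTm (fun ω hω => by rw [hconstA ω hω, hconstB ω hω])]
    rw [setIntegral_const, smul_eq_mul, mul_comm]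
    rfl
  -- combine in ℝ
  have key : (P (f ⁻¹' s ∩ g ⁻¹' t ∩ T)).toReal * (P T).toReal
      = (P (f ⁻¹' s ∩ T)).toReal * (P (g ⁻¹' t ∩ T)).toReal := by
    rw [← hintFAB, ← hintFA, ← hintFB, hconstIntA, hconstIntB, hconstIntAB]
    ring
  refine (ENNReal.toReal_eq_toReal_iff' (ENNReal.mul_ne_top (measure_ne_top _ _) (measure_ne_top _ _))
    (ENNReal.mul_ne_top (measure_ne_top _ _) (measure_ne_top _ _))).mp ?_
  rw [ENNReal.toReal_mul, ENNReal.toReal_mul, key]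

theorem iv_joint_bound_M4
    {Ω : Type*} [MeasurableSpace Ω] [StandardBorelSpace Ω]
    (P : Measure Ω) [IsProbabilityMeasure P]
    {K m : ℕ} (hK : 1 ≤ K) (hm : 1 ≤ m)
    (Z : Ω → Fin K) (X Y Y₀ Y₁ : Ω → Bool) (U : Ω → Fin m)
    (hZ : Measurable Z) (hX : Measurable X) (hY : Measurable Y)
    (hY₀ : Measurable Y₀) (hY₁ : Measurable Y₁) (hU : Measurable U)
    (hcons : ∀ᵐ ω ∂P, Y ω = if X ω then Y₁ ω else Y₀ ω)
    (hUZ : IndepFun U Z P)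
    (hci : ∀ i : Bool,
      CondIndepFun (MeasurableSpace.comap U inferInstance) hU.comap_le
        (fun ω => if i then Y₁ ω else Y₀ ω) (fun ω => (X ω, Z ω)) P) :
    ∀ (z : Fin K), 0 < P {ω | Z ω = z} →
      ∀ y y' : Bool,
        P {ω | Y₀ ω = y ∧ Y₁ ω = y'}
          ≤ P[{ω | X ω = false} ∩ {ω | Y ω = y} | {ω | Z ω = z}]
            + P[{ω | X ω = true} ∩ {ω | Y ω = y'} | {ω | Z ω = z}] := by
  intro z hz y y'
  have hZz : MeasurableSet {ω | Z ω = z} := hZ (measurableSet_singleton z)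
  -- rewrite the conditional probabilities and use consistency
  rw [cond_apply hZz, cond_apply hZz]
  have hcons0 : P ({ω | Z ω = z} ∩ ({ω | X ω = false} ∩ {ω | Y ω = y}))
      = P ({ω | Y₀ ω = y} ∩ ({ω | X ω = false} ∩ {ω | Z ω = z})) := by
    apply measure_congr
    rw [Filter.eventuallyEq_set]
    filter_upwards [hcons] with ω hω
    simp only [Set.mem_inter_iff, Set.mem_setOf_eq]
    constructor
    · rintro ⟨hzω, hxω, hyω⟩
      rw [hω, hxω] at hyω
      exact ⟨by simpa using hyω, hxω, hzω⟩
    · rintro ⟨hy0, hxω, hzω⟩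
      refine ⟨hzω, hxω, ?_⟩
      rw [hω, hxω]
      simpa using hy0
  have hcons1 : P ({ω | Z ω = z} ∩ ({ω | X ω = true} ∩ {ω | Y ω = y'}))
      = P ({ω | Y₁ ω = y'} ∩ ({ω | X ω = true} ∩ {ω | Z ω = z})) := by
    apply measure_congr
    rw [Filter.eventuallyEq_set]
    filter_upwards [hcons] with ω hω
    simp only [Set.mem_inter_iff, Set.mem_setOf_eq]
    constructor
    · rintro ⟨hzω, hxω, hyω⟩
      rw [hω, hxω] at hyω
      exact ⟨by simpa using hyω, hxω, hzω⟩
    · rintro ⟨hy1, hxω, hzω⟩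
      refine ⟨hzω, hxω, ?_⟩
      rw [hω, hxω]
      simpa using hy1
  rw [hcons0, hcons1, ← mul_add, ← ENNReal.div_eq_inv_mul,
    ENNReal.le_div_iff_mul_le (Or.inl hz.ne') (Or.inl (measure_ne_top _ _))]
  -- names for the relevant sets
  set J : Set Ω := {ω | Y₀ ω = y ∧ Y₁ ω = y'} with hJ
  set A₀ : Set Ω := {ω | Y₀ ω = y} with hA₀
  set A₁ : Set Ω := {ω | Y₁ ω = y'} with hA₁
  set B₀ : Set Ω := {ω | X ω = false} ∩ {ω | Z ω = z} with hB₀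
  set B₁ : Set Ω := {ω | X ω = true} ∩ {ω | Z ω = z} with hB₁
  have hJm : MeasurableSet J := by
    have : J = Y₀ ⁻¹' {y} ∩ Y₁ ⁻¹' {y'} := rfl
    rw [this]
    exact (hY₀ (measurableSet_singleton _)).inter (hY₁ (measurableSet_singleton _))
  have hA₀m : MeasurableSet A₀ := hY₀ (measurableSet_singleton _)
  have hA₁m : MeasurableSet A₁ := hY₁ (measurableSet_singleton _)
  have hB₀m : MeasurableSet B₀ :=
    (hX (measurableSet_singleton _)).inter hZz
  have hB₁m : MeasurableSet B₁ :=
    (hX (measurableSet_singleton _)).inter hZz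
  -- decompose by values of U
  have hdecomp : ∀ (S : Set Ω), MeasurableSet S →
      P S = ∑ u : Fin m, P (S ∩ U ⁻¹' {u}) := by
    intro S hS
    have hcover : S = ⋃ u : Fin m, S ∩ U ⁻¹' {u} := by
      ext ω; simp
    conv_lhs => rw [hcover]
    rw [measure_iUnion ?_ (fun u => hS.inter (hU (measurableSet_singleton u))),
      tsum_fintype]
    intro u v huv
    simp only [Function.onFun, Set.disjoint_left]
    rintro ω ⟨-, h1⟩ ⟨-, h2⟩
    exact huv (h1.symm.trans h2 : u = v)
  rw [hdecomp J hJm, hdecomp (A₀ ∩ B₀) (hA₀m.inter hB₀m), hdecomp (A₁ ∩ B₁) (hA₁m.inter hB₁m),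
    Finset.sum_mul, ← Finset.sum_add_distrib]
  apply Finset.sum_le_sum
  intro u _
  -- per-u inequality
  set T : Set Ω := U ⁻¹' {u} with hT
  by_cases hp : P T = 0
  · have : P (J ∩ T) = 0 :=
      le_antisymm ((measure_mono Set.inter_subset_right).trans hp.le) zero_le
    rw [this, zero_mul]
    exact zero_le
  -- multiply by P T and use the key conditional-independence identity
  rw [← ENNReal.mul_le_mul_iff_left hp (measure_ne_top P T)]
  -- key identities
  have key0 : P (A₀ ∩ B₀ ∩ T) * P T = P (A₀ ∩ T) * P (B₀ ∩ T) := by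
    have h := keyCI P hU (m := m)
      (f := fun ω => if false then Y₁ ω else Y₀ ω) (g := fun ω => (X ω, Z ω))
      (by simpa using hY₀) (hX.prodMk hZ) (hci false)
      (s := {y}) (t := {false} ×ˢ {z}) (measurableSet_singleton _)
      ((measurableSet_singleton _).prod (measurableSet_singleton _)) u
    have hfs : (fun ω => if false then Y₁ ω else Y₀ ω) ⁻¹' {y} = A₀ := by
      ext ω; simp [hA₀]
    have hgt : (fun ω => (X ω, Z ω)) ⁻¹' ({false} ×ˢ {z}) = B₀ := by
      ext ω; simp [hB₀, Set.mem_prod]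
    rwa [hfs, hgt] at h
  have key1 : P (A₁ ∩ B₁ ∩ T) * P T = P (A₁ ∩ T) * P (B₁ ∩ T) := by
    have h := keyCI P hU (m := m)
      (f := fun ω => if true then Y₁ ω else Y₀ ω) (g := fun ω => (X ω, Z ω))
      (by simpa using hY₁) (hX.prodMk hZ) (hci true)
      (s := {y'}) (t := {true} ×ˢ {z}) (measurableSet_singleton _)
      ((measurableSet_singleton _).prod (measurableSet_singleton _)) u
    have hfs : (fun ω => if true then Y₁ ω else Y₀ ω) ⁻¹' {y'} = A₁ := by
      ext ω; simp [hA₁]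
    have hgt : (fun ω => (X ω, Z ω)) ⁻¹' ({true} ×ˢ {z}) = B₁ := by
      ext ω; simp [hB₁, Set.mem_prod]
    rwa [hfs, hgt] at h
  -- B₀ ∩ T and B₁ ∩ T partition {Z = z} ∩ T
  have hsplit : P (B₀ ∩ T) + P (B₁ ∩ T) = P {ω | Z ω = z} * P T := by
    have hdisj : Disjoint (B₀ ∩ T) (B₁ ∩ T) := by
      simp only [Set.disjoint_left]
      rintro ω ⟨⟨h1, -⟩, -⟩ ⟨⟨h2, -⟩, -⟩
      simp only [Set.mem_setOf_eq] at h1 h2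
      rw [h1] at h2; exact Bool.false_ne_true h2
    have hunion : B₀ ∩ T ∪ B₁ ∩ T = {ω | Z ω = z} ∩ T := by
      ext ω
      simp only [hB₀, hB₁, Set.mem_union, Set.mem_inter_iff, Set.mem_setOf_eq]
      cases hxb : X ω <;> simp [hxb] <;> tauto
    have hindep : P ({ω | Z ω = z} ∩ T) = P {ω | Z ω = z} * P T := by
      have h := hUZ.measure_inter_preimage_eq_mul {u} {z}
        (measurableSet_singleton _) (measurableSet_singleton _)
      have hz' : Z ⁻¹' {z} = {ω | Z ω = z} := rfl
      rw [Set.inter_comm]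
      rw [hT, ← hz', h, mul_comm]
    rw [← measure_union hdisj (hB₁m.inter (hU (measurableSet_singleton u))), hunion, hindep]
  -- finish
  calc P (J ∩ T) * P {ω | Z ω = z} * P T
      = P (J ∩ T) * (P (B₀ ∩ T) + P (B₁ ∩ T)) := by rw [hsplit]; ring
    _ = P (J ∩ T) * P (B₀ ∩ T) + P (J ∩ T) * P (B₁ ∩ T) := by rw [mul_add]
    _ ≤ P (A₀ ∩ T) * P (B₀ ∩ T) + P (A₁ ∩ T) * P (B₁ ∩ T) := by
        gcongr
        · exact fun ω hω => hω.1
        · exact fun ω hω => hω.2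
    _ = P (A₀ ∩ B₀ ∩ T) * P T + P (A₁ ∩ B₁ ∩ T) * P T := by rw [key0, key1]
    _ = (P (A₀ ∩ B₀ ∩ T) + P (A₁ ∩ B₁ ∩ T)) * P T := by rw [add_mul]
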